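/- arXiv:2305.08136 — 5 statements merged into one kernel-verified Lean document; each statement's English description precedes it below -/
import Mathlib

section
/- Let f : ℝ → ℝ be twice differentiable with f'' > 0 on (0,∞), F = f', and G(x) = F(2x/(1+x)) - F(2/(1+x)). Then G is injective on (0,∞). -/
open Real Set

/-- G is injective on (0,∞). -/
theorem stmt_1 (f : ℝ → ℝ)
    (hf : ∀ x ∈ Ioi (0:ℝ), DifferentiableAt ℝ f x)
    (hf' : ∀ x ∈ Ioi (0:ℝ), DifferentiableAt ℝ (deriv f) x)
    (hf'' : ∀ x ∈ Ioi (0:ℝ), 0 < deriv (deriv f) x)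
    (G : ℝ → ℝ)
    (hG : ∀ x, G x = deriv f (2 * x / (1 + x)) - deriv f (2 / (1 + x))) :
    InjOn G (Ioi 0) := by
  have hF : StrictMonoOn (deriv f) (Ioi 0) := by
    apply strictMonoOn_of_deriv_pos (convex_Ioi 0)
    · exact fun x hx => ((hf' x hx).continuousAt).continuousWithinAt
    · rw [interior_Ioi]; exact hf''
  have key : StrictMonoOn G (Ioi 0) := by
    intro a ha b hb hab
    rw [hG a, hG b]
    have ha0 : (0:ℝ) < a := ha
    have hb0 : (0:ℝ) < b := hb
    have h1a : (0:ℝ) < 1 + a := by linarith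
    have h1b : (0:ℝ) < 1 + b := by linarith
    have m1 : (2 * a / (1 + a)) ∈ Ioi (0:ℝ) := mem_Ioi.mpr (by positivity)
    have m2 : (2 * b / (1 + b)) ∈ Ioi (0:ℝ) := mem_Ioi.mpr (by positivity)
    have m3 : (2 / (1 + a)) ∈ Ioi (0:ℝ) := mem_Ioi.mpr (by positivity)
    have m4 : (2 / (1 + b)) ∈ Ioi (0:ℝ) := mem_Ioi.mpr (by positivity)
    have l1 : 2 * a / (1 + a) < 2 * b / (1 + b) := by
      rw [div_lt_div_iff₀ h1a h1b]; nlinarith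
    have l2 : 2 / (1 + b) < 2 / (1 + a) := by
      rw [div_lt_div_iff₀ h1b h1a]; nlinarith
    have i1 := hF m1 m2 l1
    have i2 := hF m4 m3 l2
    linarith
  exact key.injOn
end

section
/- (Theorem 3) Let π : Fin r × Fin r → ℝ with π(i,j) > 0. Suppose (DPS) there exist d such that π(i,j)/π(j,i) = d(j-i) for all i < j, and (DGS) for each k ∈ {1,...,r-1}, ∑_{j-i=k} π(i,j) = ∑_{i-j=k} π(i,j). Then π(i,j) = π(j,i) for all i, j (the symmetry model S holds). -/
/-!
Under DPS, each entry on the `k`-th superdiagonal is `d k` times its mirror image on the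
`k`-th subdiagonal, so the `k`-th superdiagonal sum is `d k` times the (positive) `k`-th
subdiagonal sum. DGS makes these two sums equal, forcing `d k = 1` for every `k`, which is
symmetry.
-/

open Finset

variable {r : ℕ}

def subdiagSum {M : Type*} [AddCommMonoid M] (π : Fin r × Fin r → M) (k : ℕ) : M :=
  ∑ p : Fin r × Fin r, if (p.1 : ℕ) = p.2 + k then π p else 0

lemma superdiagSum_eq_subdiagSum_swap {M : Type*} [AddCommMonoid M] (π : Fin r × Fin r → M)
    (k : ℕ) :
    (∑ p : Fin r × Fin r, if (p.2 : ℕ) = p.1 + k then π p else 0) =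
      subdiagSum (fun p => π p.swap) k :=
  Fintype.sum_equiv (Equiv.prodComm _ _) _ _ fun _ => rfl

lemma subdiagSum_eq_mul {M : Type*} [NonUnitalNonAssocSemiring M] {π π' : Fin r × Fin r → M}
    {k : ℕ} (c : M) (h : ∀ i j : Fin r, (i : ℕ) = j + k → π' (i, j) = c * π (i, j)) :
    subdiagSum π' k = c * subdiagSum π k := by
  rw [subdiagSum, subdiagSum, mul_sum]
  refine sum_congr rfl fun p _ => ?_
  split_ifs with hp
  · exact h p.1 p.2 hp
  · rw [mul_zero]

lemma subdiagSum_pos {π : Fin r × Fin r → ℝ} (hpos : ∀ p, 0 < π p) {k : ℕ} (hk : k < r) :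
    0 < subdiagSum π k := by
  refine sum_pos' (fun p _ => ?_) ⟨(⟨k, hk⟩, ⟨0, by omega⟩), mem_univ _, ?_⟩
  · split_ifs
    exacts [(hpos p).le, le_rfl]
  · simp [hpos]

lemma odds_eq_one_of_superdiagSum_eq_subdiagSum {π : Fin r × Fin r → ℝ} (hpos : ∀ p, 0 < π p)
    {d : ℕ → ℝ} (hd : ∀ i j : Fin r, i < j → π (i, j) / π (j, i) = d ((j : ℕ) - (i : ℕ)))
    {k : ℕ} (hk₀ : 1 ≤ k) (hk : k < r)
    (hsum : (∑ p : Fin r × Fin r, if (p.2 : ℕ) = p.1 + k then π p else 0) = subdiagSum π k) :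
    d k = 1 := by
  have hmirror : ∀ i j : Fin r, (i : ℕ) = j + k → π (j, i) = d k * π (i, j) := by
    intro i j hij
    have hodds := hd j i (Fin.lt_def.mpr (by omega))
    rwa [show (i : ℕ) - j = k by omega, div_eq_iff (hpos _).ne'] at hodds
  rw [superdiagSum_eq_subdiagSum_swap, subdiagSum_eq_mul (d k) hmirror] at hsum
  exact (mul_eq_right₀ (subdiagSum_pos hpos hk).ne').mp hsum

theorem stmt_8_general (r : ℕ) (π : Fin r × Fin r → ℝ)
    (hpos : ∀ p, 0 < π p)
    (hDPS : ∃ d : ℕ → ℝ, ∀ i j : Fin r, i < j →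
        π (i, j) / π (j, i) = d ((j : ℕ) - (i : ℕ)))
    (hDGS : ∀ k : ℕ, 1 ≤ k → k ≤ r - 1 →
        (∑ p : Fin r × Fin r, if (p.2 : ℕ) = (p.1 : ℕ) + k then π p else 0) =
        (∑ p : Fin r × Fin r, if (p.1 : ℕ) = (p.2 : ℕ) + k then π p else 0)) :
    ∀ i j : Fin r, π (i, j) = π (j, i) := by
  obtain ⟨d, hd⟩ := hDPS
  have hsymm : ∀ i j : Fin r, i < j → π (i, j) = π (j, i) := by
    intro i j hij
    have hij' : (i : ℕ) < j := hij
    have hdk : d ((j : ℕ) - i) = 1 :=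
      odds_eq_one_of_superdiagSum_eq_subdiagSum hpos hd (by omega) (by omega)
        (hDGS _ (by omega) (by omega))
    rw [← div_eq_one_iff_eq (hpos _).ne', hd i j hij, hdk]
  intro i j
  rcases lt_trichotomy i j with h | rfl | h
  · exact hsymm i j h
  · rfl
  · exact (hsymm j i h).symm

/-- Theorem 3: if the DPS model and the DGS model both hold,
then the symmetry model S holds. -/
theorem stmt_8 (r : ℕ) (hr : 2 ≤ r) (π : Fin r × Fin r → ℝ)
    (hpos : ∀ p, 0 < π p)
    (hDPS : ∃ d : ℕ → ℝ, ∀ i j : Fin r, i < j →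
        π (i, j) / π (j, i) = d ((j : ℕ) - (i : ℕ)))
    (hDGS : ∀ k : ℕ, 1 ≤ k → k ≤ r - 1 →
        (∑ p : Fin r × Fin r, if (p.2 : ℕ) = (p.1 : ℕ) + k then π p else 0) =
        (∑ p : Fin r × Fin r, if (p.1 : ℕ) = (p.2 : ℕ) + k then π p else 0)) :
    ∀ i j : Fin r, π (i, j) = π (j, i) :=
  stmt_8_general r π hpos hDPS hDGS
end

section
/- (Likelihood-ratio statistic decomposition) Let n : Fin r × Fin r → ℝ with n(i,j) > 0. With the DPS fitted values m₁ and DGS fitted values m₂ as in Goodman's closed forms, and the symmetry fitted values m₃(i,j) = (n(i,j)+n(j,i))/2, the statistic G²(M) = 2∑_{i,j} n(i,j)·log(n(i,j)/m(i,j)) satisfies G²(m₃) = G²(m₁) + G²(m₂). -/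
open Real

/-- Sum over the k-th superdiagonal band: ∑_{j-i=k} x(i,j). -/
def bandU (r : ℕ) (x : Fin r × Fin r → ℝ) (k : ℕ) : ℝ :=
  ∑ p : Fin r × Fin r, if (p.2 : ℕ) = (p.1 : ℕ) + k then x p else 0

/-- Sum over the k-th subdiagonal band: ∑_{i-j=k} x(i,j) = ∑_{j-i=k} x(j,i). -/
def bandL (r : ℕ) (x : Fin r × Fin r → ℝ) (k : ℕ) : ℝ :=
  ∑ p : Fin r × Fin r, if (p.1 : ℕ) = (p.2 : ℕ) + k then x p else 0

/-- Likelihood-ratio chi-square statistic G²(m) = 2 ∑ n log(n/m). -/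
noncomputable def G2 (r : ℕ) (n m : Fin r × Fin r → ℝ) : ℝ :=
  2 * ∑ p : Fin r × Fin r, n p * Real.log (n p / m p)

/-- the likelihood-ratio statistic for the S model decomposes as
G²(S) = G²(DPS) + G²(DGS). -/
theorem stmt_14 (r : ℕ) (hr : 2 ≤ r) (n m₁ m₂ m₃ : Fin r × Fin r → ℝ)
    (hn : ∀ p, 0 < n p)
    (hm1U : ∀ i j : Fin r, i < j →
        m₁ (i, j) = bandU r n ((j : ℕ) - (i : ℕ)) /
            (bandU r n ((j : ℕ) - (i : ℕ)) + bandL r n ((j : ℕ) - (i : ℕ))) *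
            (n (i, j) + n (j, i)))
    (hm1L : ∀ i j : Fin r, i < j →
        m₁ (j, i) = bandL r n ((j : ℕ) - (i : ℕ)) /
            (bandU r n ((j : ℕ) - (i : ℕ)) + bandL r n ((j : ℕ) - (i : ℕ))) *
            (n (i, j) + n (j, i)))
    (hm1D : ∀ i : Fin r, m₁ (i, i) = n (i, i))
    (hm2U : ∀ i j : Fin r, i < j →
        m₂ (i, j) = (bandU r n ((j : ℕ) - (i : ℕ)) + bandL r n ((j : ℕ) - (i : ℕ))) *
            n (i, j) / (2 * bandU r n ((j : ℕ) - (i : ℕ))))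
    (hm2L : ∀ i j : Fin r, i < j →
        m₂ (j, i) = (bandU r n ((j : ℕ) - (i : ℕ)) + bandL r n ((j : ℕ) - (i : ℕ))) *
            n (j, i) / (2 * bandL r n ((j : ℕ) - (i : ℕ))))
    (hm2D : ∀ i : Fin r, m₂ (i, i) = n (i, i))
    (hm3 : ∀ i j : Fin r, m₃ (i, j) = (n (i, j) + n (j, i)) / 2) :
    G2 r n m₃ = G2 r n m₁ + G2 r n m₂ := by

  have bUpos : ∀ i j : Fin r, i < j → 0 < bandU r n ((j : ℕ) - (i : ℕ)) := by
    intro i j hij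
    have hij' : (i : ℕ) < (j : ℕ) := hij
    apply Finset.sum_pos'
    · intro p _
      split
      · exact (hn p).le
      · exact le_refl 0
    · refine ⟨(i, j), Finset.mem_univ _, ?_⟩
      have h1 : (i : ℕ) + ((j : ℕ) - (i : ℕ)) = (j : ℕ) := Nat.add_sub_cancel' hij'.le
      simp only [h1, if_pos rfl]
      exact hn (i, j)
  have bLpos : ∀ i j : Fin r, i < j → 0 < bandL r n ((j : ℕ) - (i : ℕ)) := by
    intro i j hij
    have hij' : (i : ℕ) < (j : ℕ) := hij
    apply Finset.sum_pos'
    · intro p _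
      split
      · exact (hn p).le
      · exact le_refl 0
    · refine ⟨(j, i), Finset.mem_univ _, ?_⟩
      have h1 : (i : ℕ) + ((j : ℕ) - (i : ℕ)) = (j : ℕ) := Nat.add_sub_cancel' hij'.le
      simp only [h1, if_pos rfl]
      exact hn (j, i)
  have key : ∀ p : Fin r × Fin r,
      n p * Real.log (n p / m₃ p)
        = n p * Real.log (n p / m₁ p) + n p * Real.log (n p / m₂ p) := by
    rintro ⟨i, j⟩
    rcases lt_trichotomy i j with h | h | h
    · have hU := bUpos i j h
      have hL := bLpos i j h
      have ha := hn (i, j)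
      have hb := hn (j, i)
      rw [hm1U i j h, hm2U i j h, hm3 i j, ← mul_add]
      congr 1
      rw [← Real.log_mul (by positivity) (by positivity)]
      congr 1
      field_simp
    · subst h
      have ha := hn (i, i)
      have h3 : (n (i, i) + n (i, i)) / 2 = n (i, i) := by ring
      rw [hm1D i, hm2D i, hm3 i i, h3, div_self ha.ne', Real.log_one]
      ring
    · have hU := bUpos j i h
      have hL := bLpos j i h
      have ha := hn (i, j)
      have hb := hn (j, i)
      rw [hm1L j i h, hm2L j i h, hm3 i j, ← mul_add]
      congr 1
      rw [← Real.log_mul (by positivity) (by positivity)]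
      congr 1
      field_simp
      ring
  simp only [G2]
  rw [← mul_add, ← Finset.sum_add_distrib]
  congr 1
  exact Finset.sum_congr rfl fun p _ => key p
end

section
/- (Corollary 1, CS[f] ≡ CS) Let π be a positive probability distribution on Fin r × Fin r and f twice differentiable with f'' > 0, F = f'. Then there exists a single constant a such that F(2π^c(i,j)) - F(2π^c(j,i)) = a for all i < j if and only if there exists a single constant d > 0 such that π(i,j)/π(j,i) = d for all i < j. -/
open Set

/-- Corollary 1: the CS[f] model is equivalent to the CS model
regardless of f. -/
theorem stmt_17 (r : ℕ) (hr : 2 ≤ r) (π : Fin r × Fin r → ℝ)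
    (hpos : ∀ p, 0 < π p) (hsum : ∑ p : Fin r × Fin r, π p = 1)
    (f : ℝ → ℝ)
    (hf : ∀ x ∈ Ioi (0:ℝ), DifferentiableAt ℝ f x)
    (hf' : ∀ x ∈ Ioi (0:ℝ), DifferentiableAt ℝ (deriv f) x)
    (hf'' : ∀ x ∈ Ioi (0:ℝ), 0 < deriv (deriv f) x)
    (πc : Fin r × Fin r → ℝ)
    (hπc : ∀ i j, πc (i, j) = π (i, j) / (π (i, j) + π (j, i))) :
    (∃ a : ℝ, ∀ i j : Fin r, i < j →
        deriv f (2 * πc (i, j)) - deriv f (2 * πc (j, i)) = a) ↔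
    (∃ d : ℝ, 0 < d ∧ ∀ i j : Fin r, i < j → π (i, j) / π (j, i) = d) := by
  have hF : StrictMonoOn (deriv f) (Ioi (0:ℝ)) := by
    apply strictMonoOn_of_deriv_pos (convex_Ioi 0)
    · exact fun x hx => (hf' x hx).continuousAt.continuousWithinAt
    · rwa [interior_Ioi]
  have hA : ∀ i j : Fin r, 2 * πc (i, j)
      = 2 * (π (i, j) / π (j, i)) / (π (i, j) / π (j, i) + 1) := by
    intro i j
    have h1 := (hpos (i, j)).ne'
    have h2 := (hpos (j, i)).ne'
    have h3 : π (i, j) + π (j, i) ≠ 0 := by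
      have := hpos (i, j); have := hpos (j, i); positivity
    rw [hπc]
    field_simp
  have hB : ∀ i j : Fin r, 2 * πc (j, i)
      = 2 / (π (i, j) / π (j, i) + 1) := by
    intro i j
    have h1 := (hpos (i, j)).ne'
    have h2 := (hpos (j, i)).ne'
    have h3 : π (j, i) + π (i, j) ≠ 0 := by
      have := hpos (i, j); have := hpos (j, i); positivity
    have hne : π (i, j) / π (j, i) + 1 ≠ 0 := by
      have := hpos (i, j); have := hpos (j, i); positivity
    rw [hπc, eq_div_iff hne]
    field_simp
    ring
  have mem1 : ∀ x : ℝ, 0 < x → 2 * x / (x + 1) ∈ Ioi (0:ℝ) := by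
    intro x hx
    have : (0:ℝ) < x + 1 := by linarith
    exact div_pos (by linarith) this
  have mem2 : ∀ x : ℝ, 0 < x → 2 / (x + 1) ∈ Ioi (0:ℝ) := by
    intro x hx
    have : (0:ℝ) < x + 1 := by linarith
    exact div_pos (by norm_num) this
  have mono1 : ∀ x y : ℝ, 0 < x → x < y → 2 * x / (x + 1) < 2 * y / (y + 1) := by
    intro x y hx hxy
    rw [div_lt_div_iff₀ (by linarith) (by linarith)]
    nlinarith
  have mono2 : ∀ x y : ℝ, 0 < x → x < y → 2 / (y + 1) < 2 / (x + 1) := by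
    intro x y hx hxy
    apply div_lt_div_of_pos_left (by norm_num) (by linarith) (by linarith)
  have hGinj : ∀ x y : ℝ, 0 < x → 0 < y →
      deriv f (2 * x / (x + 1)) - deriv f (2 / (x + 1))
        = deriv f (2 * y / (y + 1)) - deriv f (2 / (y + 1)) → x = y := by
    intro x y hx hy h
    rcases lt_trichotomy x y with h' | h' | h'
    · exfalso
      have t1 := hF (mem1 x hx) (mem1 y hy) (mono1 x y hx h')
      have t2 := hF (mem2 y hy) (mem2 x hx) (mono2 x y hx h')
      linarith
    · exact h'
    · exfalso
      have t1 := hF (mem1 y hy) (mem1 x hx) (mono1 y x hy h')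
      have t2 := hF (mem2 x hx) (mem2 y hy) (mono2 y x hy h')
      linarith
  constructor
  · rintro ⟨a, ha⟩
    have h0 : (0 : ℕ) < r := by omega
    have h1 : (1 : ℕ) < r := by omega
    set i0 : Fin r := ⟨0, h0⟩
    set j0 : Fin r := ⟨1, h1⟩
    have h01 : i0 < j0 := by simp [i0, j0, Fin.lt_def]
    refine ⟨π (i0, j0) / π (j0, i0), div_pos (hpos _) (hpos _), ?_⟩
    intro i j hij
    apply hGinj _ _ (div_pos (hpos _) (hpos _)) (div_pos (hpos _) (hpos _))
    have e1 := ha i j hij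
    have e2 := ha i0 j0 h01
    rw [hA i j, hB i j] at e1
    rw [hA i0 j0, hB i0 j0] at e2
    rw [e1, e2]
  · rintro ⟨d, hd, hdall⟩
    refine ⟨deriv f (2 * d / (d + 1)) - deriv f (2 / (d + 1)), ?_⟩
    intro i j hij
    rw [hA i j, hB i j, hdall i j hij]
end

section
/- Let G(x) = F(2x/(1+x)) - F(2/(1+x)) for x > 0 where F = f' and f is twice differentiable with f'' > 0. Then G(1) = 0, G(x) > 0 for x > 1, and G(x) < 0 for 0 < x < 1. Consequently, in the DPS model π(i,j)/π(j,i) = d(k) (i < j, k = j-i), the sign of the DPS[f] constant a(k) = G(d(k)) agrees with the sign of d(k) - 1. -/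
open Real Set

/-- G(1) = 0, G(x) > 0 for x > 1, and G(x) < 0 for 0 < x < 1;
hence the sign of the DPS[f] constant a(k) = G(d(k)) agrees with the sign of
d(k) - 1. -/
theorem stmt_19 (f : ℝ → ℝ)
    (hf : ∀ x ∈ Ioi (0:ℝ), DifferentiableAt ℝ f x)
    (hf' : ∀ x ∈ Ioi (0:ℝ), DifferentiableAt ℝ (deriv f) x)
    (hf'' : ∀ x ∈ Ioi (0:ℝ), 0 < deriv (deriv f) x)
    (G : ℝ → ℝ)
    (hG : ∀ x, G x = deriv f (2 * x / (1 + x)) - deriv f (2 / (1 + x))) :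
    G 1 = 0 ∧ (∀ x : ℝ, 1 < x → 0 < G x) ∧
      (∀ x : ℝ, 0 < x → x < 1 → G x < 0) := by
  have hmono : StrictMonoOn (deriv f) (Ioi 0) := by
    apply strictMonoOn_of_deriv_pos (convex_Ioi 0)
    · exact fun x hx => (hf' x hx).continuousAt.continuousWithinAt
    · rw [interior_Ioi]
      exact fun x hx => hf'' x hx
  refine ⟨by rw [hG]; norm_num, ?_, ?_⟩
  · intro x hx
    have h0 : (0:ℝ) < 1 + x := by linarith
    rw [hG, sub_pos]
    apply hmono (mem_Ioi.2 (by positivity)) (mem_Ioi.2 (by positivity))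
    rw [div_lt_div_iff_of_pos_right h0]
    linarith
  · intro x hx0 hx1
    have h0 : (0:ℝ) < 1 + x := by linarith
    rw [hG, sub_neg]
    apply hmono (mem_Ioi.2 (by positivity)) (mem_Ioi.2 (by positivity))
    rw [div_lt_div_iff_of_pos_right h0]
    linarith
end
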